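/- Let O_L, O_R ∈ SO(3), let λ, λ̃ : Fin 3 → ℝ, and suppose O_L · diag(λ) · (O_R)ᵀ = diag(λ̃). Then there exist signed permutation matrices Π_L and Π_R such that Π_L · diag(λ) · (Π_R)ᵀ = diag(λ̃). -/

import Mathlib

open Matrix

lemma exists_perm_comp_eq {n : ℕ} (f g : Fin n → ℝ)
    (h : Multiset.map f Finset.univ.val = Multiset.map g Finset.univ.val) :
    ∃ σ : Equiv.Perm (Fin n), f ∘ σ = g := by
  have hp : List.Perm (List.ofFn f) (List.ofFn g) := by
    rw [← Multiset.coe_eq_coe]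
    simpa [← Fin.univ_val_map] using h
  have h1 : Monotone (f ∘ Tuple.sort f) := Tuple.monotone_sort f
  have h2 : Monotone (g ∘ Tuple.sort g) := Tuple.monotone_sort g
  have key : f ∘ Tuple.sort f = g ∘ Tuple.sort g := by
    apply List.ofFn_injective
    refine List.Perm.eq_of_sortedLE h1.sortedLE_ofFn h2.sortedLE_ofFn ?_
    exact ((Tuple.sort f).ofFn_comp_perm f).trans
      (hp.trans ((Tuple.sort g).ofFn_comp_perm g).symm)
  refine ⟨Tuple.sort f * (Tuple.sort g)⁻¹, ?_⟩
  funext i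
  have := congrFun key ((Tuple.sort g)⁻¹ i)
  simpa using this

lemma signed_perm_calc (σ : Equiv.Perm (Fin 3)) (s lam lamT : Fin 3 → ℝ)
    (hσ' : ∀ i, lam (σ i) ^ 2 = lamT i ^ 2)
    (hsv : ∀ j, s j = if lam j = 0 then 1 else lamT (σ.symm j) / lam j) :
    (Matrix.of fun i j => if i = σ.symm j then s j else 0) * Matrix.diagonal lam *
      (Matrix.of fun i j => if i = σ.symm j then (1:ℝ) else 0)ᵀ = Matrix.diagonal lamT := by
  ext i k
  simp only [Matrix.mul_apply, Matrix.mul_diagonal, Matrix.transpose_apply,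
    Matrix.of_apply, Matrix.diagonal_apply, Equiv.eq_symm_apply,
    ite_mul, zero_mul, mul_ite, mul_zero, mul_one]
  simp only [Finset.sum_ite_eq, Finset.sum_ite_eq', Finset.mem_univ, if_true,
    EmbeddingLike.apply_eq_iff_eq]
  split_ifs with hik
  · subst hik
    rw [hsv (σ i)]
    by_cases hl : lam (σ i) = 0
    · have h0 : lamT i = 0 := by
        have := hσ' i
        rw [hl] at this
        simpa [pow_eq_zero_iff] using this.symm
      simp [hl, h0]
    · simp only [hl, if_false, Equiv.symm_apply_apply]
      rw [div_mul_cancel₀ _ hl]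
  · rfl

/-- `O` is a real 3×3 special orthogonal matrix. -/
def IsSO3 (O : Matrix (Fin 3) (Fin 3) ℝ) : Prop := O * Oᵀ = 1 ∧ O.det = 1

/-- `M` is a signed permutation matrix: exactly one nonzero entry, equal to `±1`,
in each row and column. -/
def IsSignedPerm (M : Matrix (Fin 3) (Fin 3) ℝ) : Prop :=
  ∃ (p : Equiv.Perm (Fin 3)) (s : Fin 3 → ℝ),
    (∀ j, s j = 1 ∨ s j = -1) ∧ M = Matrix.of fun i j => if i = p j then s j else 0

theorem signed_perms_connect_diagonal_matrices
    (OL OR : Matrix (Fin 3) (Fin 3) ℝ) (hOL : IsSO3 OL) (hOR : IsSO3 OR)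
    (lam lamT : Fin 3 → ℝ)
    (h : OL * Matrix.diagonal lam * ORᵀ = Matrix.diagonal lamT) :
    ∃ PL PR : Matrix (Fin 3) (Fin 3) ℝ, IsSignedPerm PL ∧ IsSignedPerm PR ∧
      PL * Matrix.diagonal lam * PRᵀ = Matrix.diagonal lamT := by
  obtain ⟨hOL1, hOLdet⟩ := hOL
  obtain ⟨hOR1, hORdet⟩ := hOR
  have hORt : ORᵀ * OR = 1 := mul_eq_one_comm.mp hOR1
  have e1 : (OL * Matrix.diagonal lam * ORᵀ) * (OL * Matrix.diagonal lam * ORᵀ)ᵀ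
      = OL * Matrix.diagonal (fun i => lam i ^ 2) * OLᵀ := by
    simp only [transpose_mul, diagonal_transpose, transpose_transpose, Matrix.mul_assoc]
    rw [← Matrix.mul_assoc ORᵀ OR, hORt, Matrix.one_mul,
      ← Matrix.mul_assoc (Matrix.diagonal lam), diagonal_mul_diagonal]
    congr 2
    funext i; ring
  have hsq : OL * Matrix.diagonal (fun i => lam i ^ 2) * OLᵀ
      = Matrix.diagonal (fun i => lamT i ^ 2) := by
    rw [← e1, h, diagonal_transpose, diagonal_mul_diagonal]
    congr 1; funext i; ring
  have hdet : ∀ x : ℝ, (∏ i, (x - lam i ^ 2)) = ∏ i, (x - lamT i ^ 2) := by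
    intro x
    have d1 : ∀ v : Fin 3 → ℝ, Matrix.diagonal (fun i => x - v i)
        = x • (1 : Matrix (Fin 3) (Fin 3) ℝ) - Matrix.diagonal v := by
      intro v; ext i j
      by_cases hij : i = j <;>
        simp [Matrix.diagonal_apply, hij, Matrix.one_apply]
    have hm : OL * Matrix.diagonal (fun i => x - lam i ^ 2) * OLᵀ
        = Matrix.diagonal (fun i => x - lamT i ^ 2) := by
      rw [d1 (fun i => lam i ^ 2), d1 (fun i => lamT i ^ 2), Matrix.mul_sub,
        Matrix.sub_mul, hsq]
      congr 1
      rw [Matrix.mul_smul, Matrix.smul_mul, Matrix.mul_one, hOL1]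
    have hd := congrArg Matrix.det hm
    rw [Matrix.det_mul, Matrix.det_mul, Matrix.det_transpose, hOLdet,
      Matrix.det_diagonal, Matrix.det_diagonal] at hd
    simpa using hd
  have hpoly : (∏ i, (Polynomial.X - Polynomial.C (lam i ^ 2)))
      = ∏ i, (Polynomial.X - Polynomial.C (lamT i ^ 2)) := by
    apply Polynomial.funext
    intro x
    simpa [Polynomial.eval_prod] using hdet x
  have hms : Multiset.map (fun i => lam i ^ 2) Finset.univ.val
      = Multiset.map (fun i => lamT i ^ 2) Finset.univ.val := by
    have hr := congrArg Polynomial.roots hpoly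
    rw [Finset.prod_eq_multiset_prod, Finset.prod_eq_multiset_prod,
      show (fun i => Polynomial.X - Polynomial.C (lam i ^ 2))
        = (fun a => Polynomial.X - Polynomial.C a) ∘ (fun i => lam i ^ 2) from rfl,
      show (fun i => Polynomial.X - Polynomial.C (lamT i ^ 2))
        = (fun a => Polynomial.X - Polynomial.C a) ∘ (fun i => lamT i ^ 2) from rfl,
      ← Multiset.map_map, ← Multiset.map_map,
      Polynomial.roots_multiset_prod_X_sub_C, Polynomial.roots_multiset_prod_X_sub_C] at hr
    exact hr
  obtain ⟨σ, hσ⟩ := exists_perm_comp_eq (fun i => lam i ^ 2) (fun i => lamT i ^ 2) hms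
  have hσ' : ∀ i, lam (σ i) ^ 2 = lamT i ^ 2 := fun i => congrFun hσ i
  set s : Fin 3 → ℝ := fun j => if lam j = 0 then 1 else lamT (σ.symm j) / lam j with hs
  have hsign : ∀ j, s j = 1 ∨ s j = -1 := by
    intro j
    by_cases hl : lam j = 0
    · left; simp [hs, hl]
    · have h2 : lam j ^ 2 = lamT (σ.symm j) ^ 2 := by
        simpa using hσ' (σ.symm j)
      rcases sq_eq_sq_iff_eq_or_eq_neg.mp h2.symm with he | he
      · left; simp [hs, hl, he, div_self hl]
      · right; rw [hs]; simp only [hl, if_false, he]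
        rw [neg_div, div_self hl]
  refine ⟨Matrix.of fun i j => if i = σ.symm j then s j else 0,
      Matrix.of fun i j => if i = σ.symm j then (1 : ℝ) else 0,
      ⟨σ.symm, s, hsign, rfl⟩, ⟨σ.symm, fun _ => 1, fun _ => Or.inl rfl, rfl⟩, ?_⟩
  exact signed_perm_calc σ s lam lamT hσ' (fun j => rfl)
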